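/- Let a clause state with bound n (relative to a CNF I and a trail τ) satisfy Inv1, Inv3, and Inv4. Let β ∈ D_b with b ≤ n, and let d be a decision level with b < d ≤ n such that β is satisfied at level d (∅ →^d {β}). Then the state obtained by moving β from D_b to S_d^b (stashing the conditionally satisfied clause β at level d with restoration level b) satisfies Inv1, Inv2, Inv3, and Inv4. -/

import Mathlib

/-- A variable is a natural number. -/
abbrev Var := ℕ

/-- A literal is a pair of a variable and a Boolean polarity. -/
abbrev Lit := Var × Bool

/-- The negation of a literal flips its polarity. -/
def Lit.neg (l : Lit) : Lit := (l.1, !l.2)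

/-- A clause is a finite set of literals. -/
abbrev Clause := Finset Lit

/-- A total assignment. -/
abbrev Assignment := Var → Bool

/-- A trail is a finite list of (literal, decision level) pairs. -/
abbrev Trail := List (Lit × ℕ)

/-- An assignment satisfies a literal `(v, b)` iff it assigns `b` to `v`. -/
def SatLit (σ : Assignment) (l : Lit) : Prop := σ l.1 = l.2

/-- An assignment satisfies a clause iff it satisfies one of its literals. -/
def SatClause (σ : Assignment) (c : Clause) : Prop := ∃ l ∈ c, SatLit σ l

/-- An assignment satisfies a set of clauses iff it satisfies every clause in it. -/
def SatSet (σ : Assignment) (Γ : Set Clause) : Prop := ∀ c ∈ Γ, SatClause σ c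

/-- Entry `i` of trail `τ` is a decision: its level is positive and
no earlier entry has the same level. -/
def IsDecision (τ : Trail) (i : Fin τ.length) : Prop :=
  0 < (τ.get i).2 ∧ ∀ j : Fin τ.length, j < i → (τ.get j).2 ≠ (τ.get i).2

/-- `τ` is a trail for the input CNF `I`. -/
structure IsTrail (I : Finset Clause) (τ : Trail) : Prop where
  nodupVars : (τ.map (fun e => e.1.1)).Nodup
  levelsMono : (τ.map Prod.snd).Pairwise (· ≤ ·)
  implied : ∀ i : Fin τ.length, ¬ IsDecision τ i →
    ∀ σ : Assignment, SatSet σ ↑I →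
      (∀ j : Fin τ.length, j < i → IsDecision τ j → SatLit σ (τ.get j).1) →
      SatLit σ (τ.get i).1

/-- `τ^{≤d}`: the longest prefix of `τ` whose entries all have level `≤ d`. -/
def Trail.upTo (τ : Trail) (d : ℕ) : Trail := τ.takeWhile (fun e => e.2 ≤ d)

/-- An assignment satisfies (the literal of) every entry of a trail. -/
def SatTrail (σ : Assignment) (τ : Trail) : Prop := ∀ e ∈ τ, SatLit σ e.1

/-- `Γ →^d Δ` relative to `τ`. -/
def ImpliesAt (τ : Trail) (d : ℕ) (Γ Δ : Set Clause) : Prop :=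
  ∀ σ : Assignment, SatTrail σ (τ.upTo d) → SatSet σ Γ → SatSet σ Δ

/-- `Γ ↔^d Δ` relative to `τ`. -/
def EquivAt (τ : Trail) (d : ℕ) (Γ Δ : Set Clause) : Prop :=
  ImpliesAt τ d Γ Δ ∧ ImpliesAt τ d Δ Γ

/-- `α^{≤d}`: literals of `α` whose negation is not the literal of any entry of `τ^{≤d}`. -/
def Clause.upTo (τ : Trail) (d : ℕ) (α : Clause) : Clause :=
  α.filter (fun l => ∀ e ∈ τ.upTo d, e.1 ≠ Lit.neg l)

/-- `α` d-subsumes `β` (relative to `τ`). -/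
def SubsumesAt (τ : Trail) (d : ℕ) (α β : Clause) : Prop :=
  Clause.upTo τ d α ⊆ Clause.upTo τ d β

/-- `α` min-k-subsumes `β` (relative to `τ`). -/
def MinSubsumesAt (τ : Trail) (k : ℕ) (α β : Clause) : Prop :=
  SubsumesAt τ k α β ∧ ∀ d' < k, ¬ SubsumesAt τ d' α β

/-- `α` and `β` are resolvable on `x`. -/
def Resolvable (α β : Clause) (x : Var) : Prop := (x, true) ∈ α ∧ (x, false) ∈ β

/-- The resolveOn `α ⊗ₓ β`. -/
def resolveOn (α β : Clause) (x : Var) : Clause := α.erase (x, true) ∪ β.erase (x, false)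

/-- A clause state: groups `Dᵢ` (meaningful for `i ≤ n`), temporary clauses `D∞`,
and stashed groups `Sᵢ^q` (meaningful for `q < i ≤ n`). -/
structure ClauseState where
  D : ℕ → Set Clause
  Dinf : Set Clause
  Stash : ℕ → ℕ → Set Clause

/-- `Sᵢ := ⋃_{q<i} Sᵢ^q`. -/
def ClauseState.Sl (st : ClauseState) (i : ℕ) : Set Clause :=
  {α | ∃ q < i, α ∈ st.Stash i q}

/-- `S := ⋃_{1≤i≤n} Sᵢ`. -/
def ClauseState.Sall (st : ClauseState) (n : ℕ) : Set Clause :=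
  {α | ∃ i, 1 ≤ i ∧ i ≤ n ∧ α ∈ st.Sl i}

/-- `S⁰ := ⋃_{0<i≤n} Sᵢ^0`. -/
def ClauseState.S0 (st : ClauseState) (n : ℕ) : Set Clause :=
  {α | ∃ i, 0 < i ∧ i ≤ n ∧ α ∈ st.Stash i 0}

/-- The pervasive clauses `P := D₀ ∪ S⁰`. -/
def ClauseState.P (st : ClauseState) (n : ℕ) : Set Clause := st.D 0 ∪ st.S0 n

/-- The active-non-temporary clauses `N := ⋃_{0≤i≤n} Dᵢ`. -/
def ClauseState.N (st : ClauseState) (n : ℕ) : Set Clause := {α | ∃ i ≤ n, α ∈ st.D i}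

/-- The active clauses `A := N ∪ D∞`. -/
def ClauseState.A (st : ClauseState) (n : ℕ) : Set Clause := st.N n ∪ st.Dinf

/-- Inv1 (input-equivalence): `I ↔⁰ P`. -/
def Inv1 (I : Finset Clause) (τ : Trail) (st : ClauseState) (n : ℕ) : Prop :=
  EquivAt τ 0 ↑I (st.P n)

/-- Inv2 (correctness): `N ↔ⁿ P`. -/
def Inv2 (τ : Trail) (st : ClauseState) (n : ℕ) : Prop :=
  EquivAt τ n (st.N n) (st.P n)

/-- The representation condition on a clause `α` stashed at level `i`. -/
def Represented (τ : Trail) (st : ClauseState) (n i : ℕ) (α : Clause) : Prop :=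
  (∃ r ≤ i, ∃ β ∈ st.D r, ImpliesAt τ i {β} {α}) ∨
  (∃ r ≤ i, ∃ j, i < j ∧ j ≤ n ∧ ∃ β ∈ st.Stash j r, ImpliesAt τ i {β} {α}) ∨
  ImpliesAt τ i ∅ {α}

/-- Inv3 (representation). -/
def Inv3 (τ : Trail) (st : ClauseState) (n : ℕ) : Prop :=
  ∀ i, 1 ≤ i → i ≤ n → ∀ α ∈ st.Sl i, Represented τ st n i α

/-- Inv4 (closure): every active or stashed clause is 0-implied by `P`. -/
def Inv4 (τ : Trail) (st : ClauseState) (n : ℕ) : Prop :=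
  ∀ γ ∈ st.A n ∪ st.Sall n, ImpliesAt τ 0 (st.P n) {γ}

/-- All four BI invariants. -/
def Invs (I : Finset Clause) (τ : Trail) (st : ClauseState) (n : ℕ) : Prop :=
  Inv1 I τ st n ∧ Inv2 τ st n ∧ Inv3 τ st n ∧ Inv4 τ st n

lemma mem_upTo_mono {τ : Trail} {d d' : ℕ} (h : d ≤ d') :
    ∀ e ∈ τ.upTo d, e ∈ τ.upTo d' := by
  induction τ with
  | nil => intro e he; simp [Trail.upTo] at he
  | cons a t ih =>
    intro e he
    by_cases ha : a.2 ≤ d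
    · have ha' : a.2 ≤ d' := le_trans ha h
      simp only [Trail.upTo, List.takeWhile_cons, decide_eq_true_eq, ha, ha',
        if_pos, List.mem_cons] at he ⊢
      rcases he with rfl | he
      · exact Or.inl rfl
      · exact Or.inr (ih e he)
    · simp [Trail.upTo, List.takeWhile_cons, ha] at he

lemma satTrail_mono {σ : Assignment} {τ : Trail} {d d' : ℕ} (h : d ≤ d')
    (hs : SatTrail σ (τ.upTo d')) : SatTrail σ (τ.upTo d) :=
  fun e he => hs e (mem_upTo_mono h e he)

lemma impliesAt_mono {τ : Trail} {d d' : ℕ} {Γ Δ : Set Clause} (h : d ≤ d')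
    (hi : ImpliesAt τ d Γ Δ) : ImpliesAt τ d' Γ Δ :=
  fun σ hs hΓ => hi σ (satTrail_mono h hs) hΓ

lemma impliesAt_trans {τ : Trail} {e : ℕ} {Γ : Set Clause} {β α : Clause}
    (h1 : ImpliesAt τ e Γ {β}) (h2 : ImpliesAt τ e {β} {α}) :
    ImpliesAt τ e Γ {α} := by
  intro σ hs hΓ
  exact h2 σ hs (fun c hc => by
    rw [show c = β from hc]
    exact h1 σ hs hΓ β rfl)

lemma stash_drain (τ : Trail) (st : ClauseState) (n : ℕ) (h3 : Inv3 τ st n) :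
    ∀ k i, 1 ≤ i → i ≤ n → n - i ≤ k → ∀ α ∈ st.Sl i,
      (∃ r ≤ n, ∃ β' ∈ st.D r, ImpliesAt τ n {β'} {α}) ∨ ImpliesAt τ n ∅ {α} := by
  intro k
  induction k with
  | zero =>
    intro i h1i hin hk α hα
    rcases h3 i h1i hin α hα with ⟨r, hr, β', hβ', himp⟩ |
      ⟨r, hr, j, hij, hjn, β', hβ', himp⟩ | hsat
    · exact Or.inl ⟨r, le_trans hr hin, β', hβ', impliesAt_mono hin himp⟩
    · omega
    · exact Or.inr (impliesAt_mono hin hsat)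
  | succ k ih =>
    intro i h1i hin hk α hα
    rcases h3 i h1i hin α hα with ⟨r, hr, β', hβ', himp⟩ |
      ⟨r, hr, j, hij, hjn, β', hβ', himp⟩ | hsat
    · exact Or.inl ⟨r, le_trans hr hin, β', hβ', impliesAt_mono hin himp⟩
    · have hβ'S : β' ∈ st.Sl j := ⟨r, lt_of_le_of_lt hr hij, hβ'⟩
      have himp' : ImpliesAt τ n {β'} {α} := impliesAt_mono hin himp
      rcases ih j (by omega) hjn (by omega) β' hβ'S with ⟨r', hr', β'', hβ'', h2⟩ | h2
      · exact Or.inl ⟨r', hr', β'', hβ'', impliesAt_trans h2 himp'⟩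
      · exact Or.inr (impliesAt_trans h2 himp')
    · exact Or.inr (impliesAt_mono hin hsat)

/-- stashing a conditionally satisfied clause `β ∈ D_b` (satisfied at
level `d` with `b < d ≤ n`) into `S_d^b` preserves all BI invariants. -/
theorem stmt10 (I : Finset Clause) (τ : Trail) (hτ : IsTrail I τ)
    (st : ClauseState) (n : ℕ)
    (h1 : Inv1 I τ st n) (h3 : Inv3 τ st n) (h4 : Inv4 τ st n)
    (β : Clause) (b d : ℕ) (hβ : β ∈ st.D b) (hbd : b < d) (hdn : d ≤ n)
    (hsat : ImpliesAt τ d ∅ ({β} : Set Clause))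
    (st' : ClauseState)
    (hD : st'.D = fun q => if q = b then st.D b \ {β} else st.D q)
    (hDinf : st'.Dinf = st.Dinf)
    (hS : st'.Stash = fun i q =>
      if i = d ∧ q = b then st.Stash d b ∪ {β} else st.Stash i q) :
    Invs I τ st' n := by
  have hDsub : ∀ q, st'.D q ⊆ st.D q := by
    intro q; rw [hD]; dsimp only
    split_ifs with h
    · subst h; exact Set.diff_subset
    · exact subset_rfl
  have hSsup : ∀ i q, st.Stash i q ⊆ st'.Stash i q := by
    intro i q; rw [hS]; dsimp only
    split_ifs with h
    · obtain ⟨rfl, rfl⟩ := h; exact Set.subset_union_left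
    · exact subset_rfl
  have hSsub : ∀ i q, st'.Stash i q ⊆ st.Stash i q ∪ {β} := by
    intro i q; rw [hS]; dsimp only
    split_ifs with h
    · obtain ⟨rfl, rfl⟩ := h; exact subset_rfl
    · exact Set.subset_union_left
  have hβS' : β ∈ st'.Stash d b := by
    rw [hS]; dsimp only; rw [if_pos ⟨rfl, rfl⟩]; exact Or.inr rfl
  -- P is unchanged
  have hP : st'.P n = st.P n := by
    ext c
    unfold ClauseState.P ClauseState.S0
    rw [hD, hS]; dsimp only
    constructor
    · rintro (hc | ⟨i, hi0, hin, hci⟩)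
      · split_ifs at hc with h
        · exact Or.inl (by rw [← h] at hc; exact hc.1)
        · exact Or.inl hc
      · split_ifs at hci with h
        · obtain ⟨h1, h2⟩ := h
          rcases hci with hci | hci
          · refine Or.inr ⟨d, by omega, hdn, ?_⟩
            rw [h2]; exact hci
          · exact Or.inl (by rw [show c = β from hci, h2]; exact hβ)
        · exact Or.inr ⟨i, hi0, hin, hci⟩
    · rintro (hc | ⟨i, hi0, hin, hci⟩)
      · by_cases h0 : (0 : ℕ) = b
        · by_cases hcb : c = β
          · refine Or.inr ⟨d, hbd.trans_le' (Nat.zero_le b), hdn, ?_⟩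
            rw [if_pos ⟨rfl, h0⟩]
            exact Or.inr hcb
          · rw [if_pos h0]
            exact Or.inl ⟨by rw [← h0]; exact hc, hcb⟩
        · rw [if_neg h0]; exact Or.inl hc
      · refine Or.inr ⟨i, hi0, hin, ?_⟩
        split_ifs with h
        · obtain ⟨h1, h2⟩ := h
          rw [h1] at hci; rw [← h2]
          exact Or.inl hci
        · exact hci
  have hsatn : ImpliesAt τ n ∅ ({β} : Set Clause) := impliesAt_mono hdn hsat
  have hbn : b ≤ n := le_trans (le_of_lt hbd) hdn
  have hβA : β ∈ st.A n ∪ st.Sall n := Or.inl (Or.inl ⟨b, hbn, hβ⟩)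
  have hNsub : ∀ γ ∈ st'.N n, γ ∈ st.N n := by
    rintro γ ⟨i, hin, hγ⟩; exact ⟨i, hin, hDsub i hγ⟩
  have hclos : ∀ γ ∈ st'.A n ∪ st'.Sall n, γ ∈ st.A n ∪ st.Sall n := by
    rintro γ (⟨hγ | hγ⟩ | ⟨i, h1i, hin, q, hq, hγ⟩)
    · exact Or.inl (Or.inl (hNsub γ hγ))
    · rw [hDinf] at hγ; exact Or.inl (Or.inr hγ)
    · rcases hSsub i q hγ with hγ | hγ
      · exact Or.inr ⟨i, h1i, hin, q, hq, hγ⟩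
      · exact (show γ = β from hγ) ▸ hβA
  refine ⟨?_, ?_, ?_, ?_⟩
  · -- Inv1
    unfold Inv1; rw [hP]; exact h1
  · -- Inv2
    constructor
    · -- N' →ⁿ P'
      rw [hP]
      intro σ hsT hN
      have hkey : ∀ c, (∃ r ≤ n, ∃ β' ∈ st.D r, ImpliesAt τ n {β'} {c}) →
          SatClause σ c := by
        rintro c ⟨r, hrn, β', hβ'D, himp⟩
        by_cases hc0 : β' = β
        · subst hc0
          have : ImpliesAt τ n ∅ {c} := impliesAt_trans hsatn himp
          exact this σ hsT (fun x hx => absurd hx (Set.notMem_empty x)) c rfl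
        · have hβ'N : β' ∈ st'.N n := by
            refine ⟨r, hrn, ?_⟩
            rw [hD]; dsimp only
            split_ifs with h
            · exact ⟨by rw [← h]; exact hβ'D, hc0⟩
            · exact hβ'D
          have hsβ' : SatClause σ β' := hN β' hβ'N
          exact himp σ hsT (fun x hx => by
            rw [show x = β' from hx]; exact hsβ') c rfl
      rintro c (hc | ⟨i, hi0, hin, hci⟩)
      · by_cases hcb : c = β
        · rw [hcb]
          exact hsatn σ hsT (fun x hx => absurd hx (Set.notMem_empty x)) β rfl
        · exact hkey c ⟨0, Nat.zero_le n, c, hc, fun _ _ h => h⟩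
      · have hcS : c ∈ st.Sl i := ⟨0, hi0, hci⟩
        rcases stash_drain τ st n h3 n i hi0 hin (Nat.sub_le n i) c hcS with h | h
        · exact hkey c h
        · exact h σ hsT (fun x hx => absurd hx (Set.notMem_empty x)) c rfl
    · -- P' →ⁿ N'
      rw [hP]
      intro σ hsT hPs γ hγ
      have h4γ : ImpliesAt τ 0 (st.P n) {γ} :=
        h4 γ (hclos γ (Or.inl (Or.inl hγ)))
      exact impliesAt_mono (Nat.zero_le n) h4γ σ hsT hPs γ rfl
  · -- Inv3
    intro i h1i hin α hα
    rcases hα with ⟨q, hq, hstash⟩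
    rw [hS] at hstash; dsimp only at hstash
    have hold : α ∈ st.Stash i q → Represented τ st' n i α := by
      intro hmem
      have hαS : α ∈ st.Sl i := ⟨q, hq, hmem⟩
      rcases h3 i h1i hin α hαS with ⟨r, hr, β', hβ'D, himp⟩ |
        ⟨r, hr, j, hij, hjn, β', hβ'S, himp⟩ | hs
      · by_cases hc : r = b ∧ β' = β
        · obtain ⟨h1c, h2c⟩ := hc
          rw [h1c] at hr
          rw [h2c] at himp
          by_cases hdi : d ≤ i
          · exact Or.inr (Or.inr (impliesAt_trans (impliesAt_mono hdi hsat) himp))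
          · exact Or.inr (Or.inl ⟨b, hr, d, by omega, hdn, β, hβS', himp⟩)
        · refine Or.inl ⟨r, hr, β', ?_, himp⟩
          rw [hD]; dsimp only
          split_ifs with h
          · exact ⟨by rw [← h]; exact hβ'D, fun he => hc ⟨h, he⟩⟩
          · exact hβ'D
      · exact Or.inr (Or.inl ⟨r, hr, j, hij, hjn, β', hSsup j r hβ'S, himp⟩)
      · exact Or.inr (Or.inr hs)
    split_ifs at hstash with h
    · obtain ⟨h1, h2⟩ := h
      rcases hstash with hmem | hmem
      · exact hold (by rw [h1, h2]; exact hmem)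
      · rw [show α = β from hmem]
        exact Or.inr (Or.inr (by rw [h1]; exact hsat))
    · exact hold hstash
  · -- Inv4
    intro γ hγ
    have := h4 γ (hclos γ hγ)
    rw [hP]
    exact this
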